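/- Let b ≥ 3 and r ≥ 1 be integers, and let n be an integer with 2r + b − 1 ≤ n ≤ br + 1. Then there exists a tree with b leaves and n vertices whose first nontrivial Steklov eigenvalue equals 1/r; in particular σ_{2,max}(b,n) ≥ 1/r. -/

import Mathlib

open scoped BigOperators
open Classical

/-- The Dirichlet energy of a function on a finite graph: `∑_{edges xy} (f x - f y)^2`. -/
noncomputable def dirichletEnergy {V : Type*} [Fintype V] (G : SimpleGraph V) (f : V → ℝ) : ℝ :=
  (∑ x : V, ∑ y : V, if G.Adj x y then (f x - f y) ^ 2 else 0) / 2

/-- The `k`-th Steklov (Dirichlet-to-Neumann) eigenvalue (1-indexed, in increasing order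
with multiplicity) of a finite graph `G` with boundary `B`, via the variational
(Courant–Fischer) characterization. -/
noncomputable def steklovEig {V : Type*} [Fintype V] (G : SimpleGraph V) (B : Finset V)
    (k : ℕ) : ℝ :=
  sInf { t : ℝ | ∃ F : Submodule ℝ (V → ℝ),
    Module.finrank ℝ (F.map (LinearMap.funLeft ℝ ℝ (fun x : {v // v ∈ B} => (x : V)))) = k ∧
    ∀ f ∈ F, dirichletEnergy G f ≤ t * ∑ x ∈ B, (f x) ^ 2 }

/-- The set of leaves (vertices of degree 1) of a finite graph, as a `Finset`. -/
noncomputable def leavesFinset {V : Type*} [Fintype V] (G : SimpleGraph V) : Finset V :=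
  Finset.univ.filter fun v => G.degree v = 1

/-- `σ_{k,max}(b,n)`: the maximum of the `k`-th Steklov eigenvalue over all trees with
`b` leaves (as boundary) and `n` vertices. -/
noncomputable def sigmaMax (k b n : ℕ) : ℝ :=
  sSup { s : ℝ | ∃ G : SimpleGraph (Fin n), G.IsTree ∧ (leavesFinset G).card = b ∧
    s = steklovEig G (leavesFinset G) k }

/-- `σ̃_{2,max}(D,n)`: the maximum of the first nontrivial Steklov eigenvalue over all
trees with diameter `D` and `n` vertices. -/
noncomputable def sigmaTildeMax (D n : ℕ) : ℝ :=
  sSup { s : ℝ | ∃ G : SimpleGraph (Fin n), G.IsTree ∧ G.diam = D ∧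
    s = steklovEig G (leavesFinset G) 2 }

/-!
The tree is a spider: a path `0 — 1 — ⋯ — 2r` whose midpoint `r` carries `b - 2` further legs,
each of length between `1` and `r`; the bounds on `n` are exactly what makes this possible.
The function that is linear along the path, from `-1` at `0` to `1` at `2r`, and vanishes on the
other legs has boundary mean zero and Rayleigh quotient `1/r`, so `σ₂ ≤ 1/r`. Conversely, if `f`
has boundary mean zero, then `∑_ℓ f(ℓ)² ≤ ∑_ℓ (f(ℓ) - f(r))²`, and Cauchy–Schwarz along the
pairwise edge-disjoint legs, each of length at most `r`, bounds the right-hand side by `r` times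
the Dirichlet energy of `f`.
-/

open Finset

lemma add_sq_div_add_one_le {a e d : ℝ} (hd : 0 < d) :
    (a + e) ^ 2 / (d + 1) ≤ a ^ 2 / d + e ^ 2 := by
  rw [div_add' _ _ _ hd.ne', div_le_div_iff₀ (by linarith) hd]
  nlinarith [sq_nonneg (a - d * e)]

lemma sum_sq_le_sum_sub_sq {ι : Type*} (s : Finset ι) (f : ι → ℝ) (a : ℝ)
    (hf : ∑ i ∈ s, f i = 0) : ∑ i ∈ s, f i ^ 2 ≤ ∑ i ∈ s, (f i - a) ^ 2 := by
  simp only [sub_sq, sum_add_distrib, sum_sub_distrib, ← sum_mul, ← mul_sum, hf, sum_const,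
    nsmul_eq_mul]
  nlinarith [sq_nonneg a, Nat.cast_nonneg (α := ℝ) #s]

section ParentGraph

variable {V : Type*} {p : V → V} {c : V}

def parentGraph (p : V → V) (c : V) : SimpleGraph V :=
  SimpleGraph.fromRel fun v w => v ≠ c ∧ p v = w

variable {D : V → ℕ} (hD : ∀ v, v ≠ c → D v = D (p v) + 1)
include hD

lemma parentGraph_adj {v w : V} :
    (parentGraph p c).Adj v w ↔ (v ≠ c ∧ p v = w) ∨ (w ≠ c ∧ p w = v) := by
  rw [parentGraph, SimpleGraph.fromRel_adj, and_iff_right_iff_imp]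
  rintro (⟨hv, rfl⟩ | ⟨hw, rfl⟩) h
  · have := hD v hv; rw [← h] at this; omega
  · have := hD w hw; rw [h] at this; omega

lemma parentGraph_reachable_root (v : V) : (parentGraph p c).Reachable v c := by
  suffices ∀ k, ∀ v, D v ≤ k → (parentGraph p c).Reachable v c from this _ v le_rfl
  intro k
  induction k with
  | zero =>
    intro v hv
    by_cases hvc : v = c
    · rw [hvc]
    · have := hD v hvc; omega
  | succ k ih =>
    intro v hv
    by_cases hvc : v = c
    · rw [hvc]
    · have hadj : (parentGraph p c).Adj v (p v) := (parentGraph_adj hD).2 (Or.inl ⟨hvc, rfl⟩)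
      exact hadj.reachable.trans (ih _ (by have := hD v hvc; omega))

lemma parentGraph_isTree [Finite V] : (parentGraph p c).IsTree := by
  have hconn : (parentGraph p c).Connected :=
    (SimpleGraph.connected_iff_exists_forall_reachable _).2
      ⟨c, fun v => (parentGraph_reachable_root hD v).symm⟩
  refine SimpleGraph.isTree_iff_connected_and_card.2 ⟨hconn, ?_⟩
  have hinj : Function.Injective fun v : {v // v ≠ c} => s((v : V), p v) := by
    rintro ⟨v, hv⟩ ⟨w, hw⟩ h
    rcases Sym2.eq_iff.1 h with ⟨hvw, -⟩ | ⟨hvw, hwv⟩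
    · exact Subtype.ext hvw
    · have h₁ := hD v hv; have h₂ := hD w hw
      simp only at hvw hwv
      rw [hwv] at h₁; rw [← hvw] at h₂; omega
  have hedges :
      (parentGraph p c).edgeSet = Set.range fun v : {v // v ≠ c} => s((v : V), p v) := by
    ext e
    induction e using Sym2.ind with
    | h v w =>
      rw [SimpleGraph.mem_edgeSet, parentGraph_adj hD]
      constructor
      · rintro (⟨hv, rfl⟩ | ⟨hw, rfl⟩)
        · exact ⟨⟨v, hv⟩, rfl⟩
        · exact ⟨⟨w, hw⟩, Sym2.eq_swap⟩
      · rintro ⟨⟨u, hu⟩, h⟩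
        rcases Sym2.eq_iff.1 h with ⟨rfl, rfl⟩ | ⟨rfl, rfl⟩
        · exact Or.inl ⟨hu, rfl⟩
        · exact Or.inr ⟨hu, rfl⟩
  have := Fintype.ofFinite V
  rw [hedges, Nat.card_range_of_injective hinj, Nat.card_eq_fintype_card,
    Nat.card_eq_fintype_card, Fintype.card_subtype_compl, Fintype.card_subtype_eq]
  have : 0 < Fintype.card V := Fintype.card_pos_iff.2 ⟨c⟩
  omega

lemma sq_sub_root_div_depth_le {v : V} (hv : v ≠ c) (f : V → ℝ) :
    (f v - f c) ^ 2 / D v ≤ (f (p v) - f c) ^ 2 / D (p v) + (f v - f (p v)) ^ 2 := by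
  by_cases hpv : p v = c
  · rw [hpv, sub_self, zero_pow two_ne_zero, zero_div, zero_add]
    exact div_le_self (sq_nonneg _) (Nat.one_le_cast.2 (by rw [hD v hv]; omega))
  · have hd : (0 : ℝ) < D (p v) := Nat.cast_pos.2 (by rw [hD _ hpv]; omega)
    convert add_sq_div_add_one_le (a := f (p v) - f c) (e := f v - f (p v)) hd using 2
    · ring
    · rw [hD v hv]; push_cast; ring

variable [Fintype V]

lemma dirichletEnergy_parentGraph [DecidableEq V] (f : V → ℝ) :
    dirichletEnergy (parentGraph p c) f = ∑ v ∈ {c}ᶜ, (f v - f (p v)) ^ 2 := by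
  have hsplit : ∀ v w, (if (parentGraph p c).Adj v w then (f v - f w) ^ 2 else 0) =
      (if v ≠ c ∧ p v = w then (f v - f w) ^ 2 else 0) +
        (if w ≠ c ∧ p w = v then (f w - f v) ^ 2 else 0) := by
    intro v w
    rw [if_congr (parentGraph_adj hD) rfl rfl]
    by_cases h₁ : v ≠ c ∧ p v = w <;> by_cases h₂ : w ≠ c ∧ p w = v
    · have := hD v h₁.1; have := hD w h₂.1; rw [h₁.2] at *; rw [h₂.2] at *; omega
    all_goals simp [h₁, h₂]
    exact sub_sq_comm _ _
  have hroot : ∀ g : V → V → ℝ, ∑ v, ∑ w, (if v ≠ c ∧ p v = w then g v w else 0) =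
      ∑ v ∈ {c}ᶜ, g v (p v) := by
    intro g
    simp only [ite_and, sum_ite_irrel, sum_ite_eq, mem_univ, if_true, sum_const_zero,
      ← sum_filter]
    rw [filter_ne', compl_singleton]
  unfold dirichletEnergy
  simp only [hsplit, sum_add_distrib]
  rw [sum_comm (f := fun v w => if w ≠ c ∧ p w = v then (f w - f v) ^ 2 else 0),
    hroot (fun v w => (f v - f w) ^ 2)]
  ring

lemma parentGraph_degree (v : V) :
    (parentGraph p c).degree v = #{w | w ≠ c ∧ p w = v} + if v = c then 0 else 1 := by
  rw [← SimpleGraph.card_neighborFinset_eq_degree, SimpleGraph.neighborFinset_eq_filter]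
  simp_rw [parentGraph_adj hD, or_comm (a := v ≠ c ∧ _)]
  rw [filter_or, card_union_of_disjoint]
  · congr 1
    by_cases hvc : v = c
    · simp [hvc]
    · simp [hvc, filter_eq]
  · rw [disjoint_filter]
    rintro w - ⟨hw, hwv⟩ ⟨hv, hvw⟩
    have := hD _ hw; have := hD _ hv
    rw [hwv] at *; rw [hvw] at *; omega

lemma mem_leavesFinset_parentGraph
    (hc : ∃ a b, a ≠ b ∧ (a ≠ c ∧ p a = c) ∧ (b ≠ c ∧ p b = c)) (v : V) :
    v ∈ leavesFinset (parentGraph p c) ↔ v ≠ c ∧ ∀ w, w ≠ c → p w ≠ v := by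
  rw [leavesFinset, mem_filter, parentGraph_degree hD]
  by_cases hvc : v = c
  · subst hvc
    obtain ⟨a, b, hab, ha, hb⟩ := hc
    have : 2 ≤ #{w | w ≠ v ∧ p w = v} := by
      rw [← card_pair hab]
      exact card_le_card fun w hw => by rcases mem_insert.1 hw with rfl | hw <;> simp_all
    refine iff_of_false ?_ fun h => h.1 rfl
    rw [if_pos rfl]
    exact fun h => by simp only [mem_univ, true_and] at h; omega
  · simp [hvc, filter_eq_empty_iff]

/- Summing `sq_sub_root_div_depth_le` over `v ≠ c` telescopes along the legs: by `hinj` every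
vertex other than `c` has at most one child, and the vertices of `B` have none. -/
lemma sum_sq_sub_root_div_depth_le [DecidableEq V] (hinj : Set.InjOn p {v | v ≠ c ∧ p v ≠ c})
    (B : Finset V) (hB : ∀ ℓ ∈ B, ℓ ≠ c ∧ ∀ w, w ≠ c → p w ≠ ℓ) (f : V → ℝ) :
    ∑ ℓ ∈ B, (f ℓ - f c) ^ 2 / D ℓ ≤ ∑ v ∈ {c}ᶜ, (f v - f (p v)) ^ 2 := by
  set Φ : V → ℝ := fun v => (f v - f c) ^ 2 / D v with hΦ
  have hΦc : Φ c = 0 := by simp [hΦ]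
  set S : Finset V := {v | v ≠ c ∧ p v ≠ c} with hS
  have hparents : ∑ v ∈ {c}ᶜ, Φ (p v) = ∑ u ∈ S.image p, Φ u := by
    rw [sum_image fun v hv w hw h => hinj (by simpa [hS] using hv) (by simpa [hS] using hw) h]
    refine (sum_subset (fun v hv => by simp_all) fun v hv hvS => ?_).symm
    have : p v = c := by simp_all
    rw [this, hΦc]
  have hdisj : Disjoint B (S.image p) := by
    rw [disjoint_left]
    intro ℓ hℓ hℓS
    obtain ⟨v, hv, rfl⟩ := mem_image.1 hℓS
    exact (hB _ hℓ).2 v (by simp_all) rfl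
  have hsub : B ∪ S.image p ⊆ {c}ᶜ := by
    intro v hv
    rcases mem_union.1 hv with hv | hv
    · simpa using (hB v hv).1
    · obtain ⟨w, hw, rfl⟩ := mem_image.1 hv
      simp_all
  calc ∑ ℓ ∈ B, Φ ℓ
      ≤ ∑ v ∈ {c}ᶜ, Φ v - ∑ u ∈ S.image p, Φ u := by
        rw [le_sub_iff_add_le, ← sum_union hdisj]
        exact sum_le_sum_of_subset_of_nonneg hsub fun v _ _ => by positivity
    _ ≤ ∑ v ∈ {c}ᶜ, (f v - f (p v)) ^ 2 := by
        rw [← hparents, sub_le_iff_le_add', ← sum_add_distrib]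
        exact sum_le_sum fun v hv => sq_sub_root_div_depth_le hD (by simpa using hv) f

end ParentGraph

section Steklov

variable {V : Type*}

lemma finrank_map_span_one_eq_two {B : Finset V} {g : V → ℝ} (hg_ne : ∃ x ∈ B, g x ≠ 0)
    (hg_sum : ∑ x ∈ B, g x = 0) :
    Module.finrank ℝ ((Submodule.span ℝ {1, g}).map
      (LinearMap.funLeft ℝ ℝ (fun x : {v // v ∈ B} => (x : V)))) = 2 := by
  obtain ⟨x₀, hx₀, hgx₀⟩ := hg_ne
  rw [Submodule.map_span, Set.image_pair, ← Matrix.range_cons_cons_empty, finrank_span_eq_card,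
    Fintype.card_fin]
  rw [LinearIndependent.pair_iff]
  intro a u h
  have hx : ∀ x ∈ B, a + u * g x = 0 := fun x hx => by simpa using congrFun h ⟨x, hx⟩
  have ha : a = 0 := by
    have := sum_congr rfl hx
    rw [sum_add_distrib, ← mul_sum, hg_sum, sum_const] at this
    simpa [card_ne_zero_of_mem hx₀] using this
  refine ⟨ha, ?_⟩
  have := hx x₀ hx₀
  rw [ha, zero_add] at this
  exact (mul_eq_zero.1 this).resolve_right hgx₀

variable [Fintype V]

lemma dirichletEnergy_nonneg (G : SimpleGraph V) (f : V → ℝ) : 0 ≤ dirichletEnergy G f :=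
  div_nonneg (sum_nonneg fun _ _ => sum_nonneg fun _ _ => by split_ifs <;> positivity) zero_le_two

lemma dirichletEnergy_const_add_mul (G : SimpleGraph V) (g : V → ℝ) (a t : ℝ) :
    dirichletEnergy G (fun x => a + t * g x) = t ^ 2 * dirichletEnergy G g := by
  simp only [dirichletEnergy, mul_div_assoc', mul_sum]
  congr 1
  refine sum_congr rfl fun x _ => sum_congr rfl fun y _ => ?_
  split_ifs <;> ring

lemma exists_sum_eq_zero_of_finrank_eq_two (B : Finset V) (F : Submodule ℝ (V → ℝ))
    (hF : Module.finrank ℝ (F.map (LinearMap.funLeft ℝ ℝ (fun x : {v // v ∈ B} => (x : V)))) = 2) :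
    ∃ f ∈ F, (∃ x ∈ B, f x ≠ 0) ∧ ∑ x ∈ B, f x = 0 := by
  set W := F.map (LinearMap.funLeft ℝ ℝ (fun x : {v // v ∈ B} => (x : V)))
  let sumB : ({v // v ∈ B} → ℝ) →ₗ[ℝ] ℝ := ∑ x, LinearMap.proj x
  have hker : LinearMap.ker (sumB ∘ₗ W.subtype) ≠ ⊥ :=
    LinearMap.ker_ne_bot_of_finrank_lt (by rw [hF, Module.finrank_self]; norm_num)
  obtain ⟨⟨h, hW⟩, hker, hne⟩ := (Submodule.ne_bot_iff _).1 hker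
  obtain ⟨f, hf, rfl⟩ := Submodule.mem_map.1 hW
  refine ⟨f, hf, ?_, ?_⟩
  · by_contra! h
    exact hne (Subtype.ext (funext fun x => h x x.2))
  · simp only [LinearMap.mem_ker, sumB, LinearMap.comp_apply, LinearMap.sum_apply,
      LinearMap.proj_apply, Submodule.subtype_apply, LinearMap.funLeft_apply] at hker
    rwa [← sum_coe_sort B]

lemma steklovEig_two_eq (G : SimpleGraph V) (B : Finset V) (t : ℝ) (g : V → ℝ)
    (hg_ne : ∃ x ∈ B, g x ≠ 0) (hg_sum : ∑ x ∈ B, g x = 0)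
    (hg : dirichletEnergy G g ≤ t * ∑ x ∈ B, g x ^ 2)
    (hpoincare : ∀ f : V → ℝ, ∑ x ∈ B, f x = 0 → t * ∑ x ∈ B, f x ^ 2 ≤ dirichletEnergy G f) :
    steklovEig G B 2 = t := by
  have hpos : ∀ f : V → ℝ, (∃ x ∈ B, f x ≠ 0) → 0 < ∑ x ∈ B, f x ^ 2 := fun f ⟨x, hx, hfx⟩ =>
    sum_pos' (fun _ _ => sq_nonneg _) ⟨x, hx, by positivity⟩
  have ht : 0 ≤ t :=
    (mul_nonneg_iff_of_pos_right (hpos g hg_ne)).1 ((dirichletEnergy_nonneg G g).trans hg)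
  refine IsLeast.csInf_eq ⟨⟨Submodule.span ℝ {1, g}, finrank_map_span_one_eq_two hg_ne hg_sum,
    fun f hf => ?_⟩, ?_⟩
  · obtain ⟨a, u, rfl⟩ := Submodule.mem_span_pair.1 hf
    have hfun : a • (1 : V → ℝ) + u • g = fun x => a + u * g x := by ext; simp
    have hsq : ∑ x ∈ B, (a + u * g x) ^ 2 = #B * a ^ 2 + u ^ 2 * ∑ x ∈ B, g x ^ 2 := by
      simp only [add_sq, sum_add_distrib, mul_pow, ← mul_sum, sum_const, nsmul_eq_mul, hg_sum,
        mul_zero, add_zero]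
    rw [hfun, dirichletEnergy_const_add_mul, hsq]
    nlinarith [mul_le_mul_of_nonneg_left hg (sq_nonneg u),
      mul_nonneg ht (Nat.cast_nonneg (α := ℝ) #B)]
  · rintro s ⟨F, hF, hle⟩
    obtain ⟨f, hf, hf_ne, hf_sum⟩ := exists_sum_eq_zero_of_finrank_eq_two B F hF
    exact le_of_mul_le_mul_right ((hpoincare f hf_sum).trans (hle f hf)) (hpos f hf_ne)

end Steklov

lemma steklovEig_le_sigmaMax {k b n : ℕ} (G : SimpleGraph (Fin n)) (hG : G.IsTree)
    (hb : #(leavesFinset G) = b) : steklovEig G (leavesFinset G) k ≤ sigmaMax k b n := by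
  refine le_csSup ?_ ⟨G, hG, hb, rfl⟩
  refine ((Set.finite_range fun H : SimpleGraph (Fin n) => steklovEig H (leavesFinset H) k).subset
    ?_).bddAbove
  rintro s ⟨H, -, -, rfl⟩
  exact ⟨H, rfl⟩

section Spider

/- Vertices `0, …, 2r` form a path centred at `r`; the remaining vertices `2r + 1, 2r + 2, …`
are dealt out in turn to `m` further legs hanging from `r`, so that the vertex below `v` is `v - m`
(or `r` for the first vertex of a leg). `spiderDepth` is the distance to `r`. -/
def spiderParent (r m v : ℕ) : ℕ :=
  if v < r then v + 1 else if v ≤ 2 * r then v - 1 else if v ≤ 2 * r + m then r else v - m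

def spiderDepth (r m v : ℕ) : ℕ :=
  if v < r then r - v else if v ≤ 2 * r then v - r else (v - (2 * r + 1)) / m + 1

variable {r m L : ℕ}

lemma spiderParent_lt {v : ℕ} (hv : v < 2 * r + 1 + L) : spiderParent r m v < 2 * r + 1 + L := by
  unfold spiderParent; split_ifs <;> omega

def spiderCenter (r L : ℕ) : Fin (2 * r + 1 + L) := ⟨r, by omega⟩

def spiderParentFin (r m L : ℕ) (v : Fin (2 * r + 1 + L)) : Fin (2 * r + 1 + L) :=
  ⟨spiderParent r m v, spiderParent_lt v.2⟩

def spider (r m L : ℕ) : SimpleGraph (Fin (2 * r + 1 + L)) :=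
  parentGraph (spiderParentFin r m L) (spiderCenter r L)

lemma spiderDepth_eq_spiderDepth_parent_add_one (hm : 0 < m) (v : Fin (2 * r + 1 + L))
    (hv : v ≠ spiderCenter r L) :
    spiderDepth r m v = spiderDepth r m (spiderParentFin r m L v) + 1 := by
  have hv : (v : ℕ) ≠ r := fun h => hv (Fin.ext h)
  simp only [spiderParentFin]
  rcases lt_or_ge (2 * r + m) v with hv' | hv'
  · have hpar : spiderParent r m v = v - m := by unfold spiderParent; split_ifs <;> omega
    rw [hpar, spiderDepth, spiderDepth, if_neg (by omega), if_neg (by omega), if_neg (by omega),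
      if_neg (by omega), Nat.div_eq_sub_div hm (by omega), Nat.sub_right_comm]
  · unfold spiderDepth spiderParent
    split_ifs <;> first | omega | (rw [Nat.div_eq_of_lt (by omega)]; omega)

lemma spiderDepth_le (hm : 0 < m) (hL : L ≤ m * r) (v : Fin (2 * r + 1 + L)) :
    spiderDepth r m v ≤ r := by
  have := v.2
  unfold spiderDepth
  split_ifs
  · omega
  · omega
  · have : (v - (2 * r + 1)) / m < r :=
      (Nat.div_lt_iff_lt_mul hm).2 (by rw [mul_comm r m]; omega)
    omega

lemma spiderParentFin_injOn :
    Set.InjOn (spiderParentFin r m L)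
      {v | v ≠ spiderCenter r L ∧ spiderParentFin r m L v ≠ spiderCenter r L} := by
  intro v hv w hw h
  simp only [Set.mem_ofPred_eq, ne_eq, Fin.ext_iff, spiderParentFin, spiderCenter] at hv hw h ⊢
  unfold spiderParent at hv hw h
  split_ifs at hv hw h <;> omega

lemma spider_isTree (hm : 0 < m) : (spider r m L).IsTree :=
  parentGraph_isTree (spiderDepth_eq_spiderDepth_parent_add_one hm)

lemma mem_leavesFinset_spider_iff_childless (hr : 0 < r) (hm : 0 < m) (v : Fin (2 * r + 1 + L)) :
    v ∈ leavesFinset (spider r m L) ↔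
      v ≠ spiderCenter r L ∧ ∀ w, w ≠ spiderCenter r L → spiderParentFin r m L w ≠ v := by
  refine mem_leavesFinset_parentGraph (spiderDepth_eq_spiderDepth_parent_add_one hm)
    ⟨⟨r - 1, by omega⟩, ⟨r + 1, by omega⟩, ?_⟩ v
  simp only [ne_eq, Fin.ext_iff, spiderParentFin, spiderCenter, spiderParent]
  split_ifs <;> omega

lemma mem_leavesFinset_spider (hr : 0 < r) (hm : 0 < m) (hmL : m ≤ L) (v : Fin (2 * r + 1 + L)) :
    v ∈ leavesFinset (spider r m L) ↔ (v : ℕ) = 0 ∨ (v : ℕ) = 2 * r ∨ 2 * r + 1 + L - m ≤ v := by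
  rw [mem_leavesFinset_spider_iff_childless hr hm]
  simp only [ne_eq, Fin.ext_iff, Fin.forall_iff, spiderParentFin, spiderCenter]
  have hv := v.2
  constructor
  · rintro ⟨hvr, hchild⟩
    by_contra! h
    let w := if (v : ℕ) < r then (v : ℕ) - 1 else if (v : ℕ) < 2 * r then (v : ℕ) + 1 else v + m
    exact hchild w (by simp only [w]; split_ifs <;> omega) (by simp only [w]; split_ifs <;> omega)
      (by simp only [w, spiderParent]; split_ifs <;> omega)
  · intro h
    refine ⟨by omega, fun w hw hwr => ?_⟩
    unfold spiderParent
    split_ifs <;> omega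

lemma card_leavesFinset_spider (hr : 0 < r) (hm : 0 < m) (hmL : m ≤ L) :
    #(leavesFinset (spider r m L)) = m + 2 := by
  have hval : (leavesFinset (spider r m L)).map Fin.valEmbedding =
      insert 0 (insert (2 * r) (Ico (2 * r + 1 + L - m) (2 * r + 1 + L))) := by
    ext a
    simp only [mem_map, Fin.valEmbedding_apply, mem_insert, mem_Ico]
    constructor
    · rintro ⟨v, hv, rfl⟩
      have := v.2
      rw [mem_leavesFinset_spider hr hm hmL] at hv
      omega
    · intro ha
      exact ⟨⟨a, by omega⟩, (mem_leavesFinset_spider hr hm hmL _).2 (by simp only; omega), rfl⟩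
  rw [← card_map Fin.valEmbedding, hval, card_insert_of_notMem (by simp; omega),
    card_insert_of_notMem (by simp; omega), Nat.card_Ico]
  omega

lemma sum_leavesFinset_spider (hr : 0 < r) (hm : 0 < m) (hmL : m ≤ L)
    (h : Fin (2 * r + 1 + L) → ℝ) (hh : ∀ v : Fin (2 * r + 1 + L), 2 * r < (v : ℕ) → h v = 0) :
    ∑ v ∈ leavesFinset (spider r m L), h v = h ⟨0, by omega⟩ + h ⟨2 * r, by omega⟩ := by
  rw [← sum_pair (by simp [Fin.ext_iff]; omega)]
  refine (sum_subset (fun v hv => ?_) fun v hv hv' => hh v ?_).symm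
  · rcases mem_insert.1 hv with rfl | hv
    · exact (mem_leavesFinset_spider hr hm hmL _).2 (Or.inl rfl)
    · rw [mem_singleton.1 hv]
      exact (mem_leavesFinset_spider hr hm hmL _).2 (Or.inr (Or.inl rfl))
  · rw [mem_leavesFinset_spider hr hm hmL] at hv
    simp only [mem_insert, mem_singleton, Fin.ext_iff] at hv'
    omega

noncomputable def spiderTest (r v : ℕ) : ℝ := if v ≤ 2 * r then ((v : ℝ) - r) / r else 0

lemma spiderTest_sub_spiderParent_sq (hr : 0 < r) (v : ℕ) :
    (spiderTest r v - spiderTest r (spiderParent r m v)) ^ 2 =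
      if v ≤ 2 * r then 1 / (r : ℝ) ^ 2 else 0 := by
  have hr' : (r : ℝ) ≠ 0 := by positivity
  rcases lt_or_ge v r with h | h
  · have hp : spiderParent r m v = v + 1 := if_pos h
    rw [hp, spiderTest, spiderTest, if_pos (by omega), if_pos (by omega), if_pos (by omega)]
    field_simp; push_cast; ring
  rcases le_or_gt v (2 * r) with h' | h'
  · have hp : spiderParent r m v = v - 1 := by rw [spiderParent, if_neg (by omega), if_pos h']
    rw [hp, spiderTest, spiderTest, if_pos h', if_pos (by omega), if_pos h',
      Nat.cast_sub (by omega)]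
    field_simp; push_cast; ring
  · have hp : spiderTest r (spiderParent r m v) = 0 := by
      unfold spiderParent
      split_ifs <;> simp [spiderTest] <;> omega
    rw [hp, spiderTest, if_neg (by omega), if_neg (by omega)]
    norm_num

lemma dirichletEnergy_spider_spiderTest (hr : 0 < r) (hm : 0 < m) :
    dirichletEnergy (spider r m L) (fun v => spiderTest r v) = 2 / r := by
  have hr' : (r : ℝ) ≠ 0 := by positivity
  set e : Fin (2 * r + 1 + L) → ℝ := fun v => if (v : ℕ) ≤ 2 * r then 1 / (r : ℝ) ^ 2 else 0
  have htotal : ∑ v, e v = (2 * r + 1) / (r : ℝ) ^ 2 := by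
    rw [Fin.sum_univ_eq_sum_range (fun i => if i ≤ 2 * r then 1 / (r : ℝ) ^ 2 else 0),
      sum_range_add, sum_congr rfl fun i hi => if_pos (by simp at hi; omega),
      sum_congr rfl fun i _ => if_neg (by omega)]
    simp [div_eq_mul_inv]
  have hterm (v : Fin (2 * r + 1 + L)) :
      (spiderTest r v - spiderTest r (spiderParentFin r m L v)) ^ 2 = e v :=
    spiderTest_sub_spiderParent_sq hr v
  rw [spider, dirichletEnergy_parentGraph (spiderDepth_eq_spiderDepth_parent_add_one hm),
    sum_congr rfl fun v _ => hterm v,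
    ← add_left_inj (∑ v ∈ {spiderCenter r L}, e v), sum_compl_add_sum, htotal, sum_singleton]
  simp only [e, spiderCenter, if_pos (by omega : r ≤ 2 * r)]
  field_simp

lemma one_div_mul_sum_sq_le_dirichletEnergy_spider (hr : 0 < r) (hm : 0 < m) (hL : L ≤ m * r)
    (f : Fin (2 * r + 1 + L) → ℝ) (hf : ∑ x ∈ leavesFinset (spider r m L), f x = 0) :
    1 / r * ∑ x ∈ leavesFinset (spider r m L), f x ^ 2 ≤ dirichletEnergy (spider r m L) f := by
  set B := leavesFinset (spider r m L)
  set c := spiderCenter r L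
  have hD := spiderDepth_eq_spiderDepth_parent_add_one (r := r) (L := L) hm
  have hB (ℓ) (hℓ : ℓ ∈ B) := (mem_leavesFinset_spider_iff_childless hr hm ℓ).1 hℓ
  have hdepth (ℓ) (hℓ : ℓ ∈ B) : (0 : ℝ) < spiderDepth r m ℓ ∧ (spiderDepth r m ℓ : ℝ) ≤ r :=
    ⟨Nat.cast_pos.2 (by rw [hD ℓ (hB ℓ hℓ).1]; omega), Nat.cast_le.2 (spiderDepth_le hm hL ℓ)⟩
  calc 1 / r * ∑ x ∈ B, f x ^ 2
      ≤ 1 / r * ∑ x ∈ B, (f x - f c) ^ 2 :=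
        mul_le_mul_of_nonneg_left (sum_sq_le_sum_sub_sq B f (f c) hf) (by positivity)
    _ = ∑ x ∈ B, (f x - f c) ^ 2 / r := by rw [mul_sum]; simp only [one_div_mul_eq_div]
    _ ≤ ∑ x ∈ B, (f x - f c) ^ 2 / spiderDepth r m x := sum_le_sum fun x hx =>
        div_le_div_of_nonneg_left (sq_nonneg _) (hdepth x hx).1 (hdepth x hx).2
    _ ≤ ∑ v ∈ {c}ᶜ, (f v - f (spiderParentFin r m L v)) ^ 2 :=
        sum_sq_sub_root_div_depth_le hD spiderParentFin_injOn B hB f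
    _ = dirichletEnergy (spider r m L) f := (dirichletEnergy_parentGraph hD f).symm

theorem steklovEig_spider (hr : 0 < r) (hm : 0 < m) (hmL : m ≤ L) (hL : L ≤ m * r) :
    steklovEig (spider r m L) (leavesFinset (spider r m L)) 2 = 1 / r := by
  have hr' : (r : ℝ) ≠ 0 := by positivity
  have hout (v : Fin (2 * r + 1 + L)) (hv : 2 * r < (v : ℕ)) : spiderTest r v = 0 :=
    if_neg (by omega)
  have h0 : spiderTest r 0 = -1 := by simp [spiderTest, hr']
  have h2r : spiderTest r (2 * r) = 1 := by
    rw [spiderTest, if_pos le_rfl]; push_cast; field_simp; ring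
  refine steklovEig_two_eq _ _ _ (fun v => spiderTest r v) ⟨⟨2 * r, by omega⟩,
    (mem_leavesFinset_spider hr hm hmL _).2 (Or.inr (Or.inl rfl)), by simp [h2r]⟩ ?_ ?_
    (one_div_mul_sum_sq_le_dirichletEnergy_spider hr hm hL)
  · rw [sum_leavesFinset_spider hr hm hmL _ hout]
    simp [h0, h2r]
  · rw [dirichletEnergy_spider_spiderTest hr hm,
      sum_leavesFinset_spider hr hm hmL _ fun v hv => by simp [hout v hv]]
    simp only [h0, h2r]
    exact le_of_eq (by ring)

end Spider

/-- Let `b ≥ 3` and `r ≥ 1` be integers, and let `n` be an integer with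
`2r + b - 1 ≤ n ≤ br + 1`. Then there exists a tree with `b` leaves and `n` vertices whose
first nontrivial Steklov eigenvalue equals `1/r`; in particular `σ_{2,max}(b,n) ≥ 1/r`. -/
theorem stmt13 (b r n : ℕ) (hb : 3 ≤ b) (hr : 1 ≤ r)
    (hn1 : 2 * r + b - 1 ≤ n) (hn2 : n ≤ b * r + 1) :
    (∃ G : SimpleGraph (Fin n), G.IsTree ∧ (leavesFinset G).card = b ∧
      steklovEig G (leavesFinset G) 2 = 1 / (r : ℝ)) ∧
    1 / (r : ℝ) ≤ sigmaMax 2 b n := by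
  obtain ⟨L, rfl⟩ : ∃ L, n = 2 * r + 1 + L := ⟨n - (2 * r + 1), by omega⟩
  have hm : 0 < b - 2 := by omega
  have hmL : b - 2 ≤ L := by omega
  have hL : L ≤ (b - 2) * r := by
    have : b * r = (b - 2) * r + 2 * r := by rw [← add_mul, Nat.sub_add_cancel (by omega)]
    omega
  have htree := spider_isTree (r := r) (L := L) hm
  have hcard : #(leavesFinset (spider r (b - 2) L)) = b := by
    rw [card_leavesFinset_spider hr hm hmL]; omega
  have heig := steklovEig_spider hr hm hmL hL
  exact ⟨⟨_, htree, hcard, heig⟩, heig ▸ steklovEig_le_sigmaMax _ htree hcard⟩
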